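/- Assume char 𝕂 ≠ 2. Let (C, m) together with the involution c be a weakly minimal anti-symmetric G-gapped A∞ algebra. Then m is flat and minimal: m_{0,β} = 0 and m_{1,β} = 0 for all β ∈ G. Moreover, for every k ≥ 0, β ∈ G and homogeneous elements b₁,…,b_k ∈ C of degree 1, m_{k,β}(b₁,…,b_k) = −m_{k,β}(b_k,…,b₁); in particular m_{k,β}(b,…,b) = 0 for every degree-1 element b ∈ C, so that every degree-1 element is a bounding cochain. -/

import Mathlib

/-!
Common definitions: gapped `A∞` algebras over the field `𝕂`, graded by `ℤ/N` (`N` even),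
with gapping monoid `G ⊆ ℝ≥0`.  Operations are recorded as families of `k`-ary maps
together with multilinearity and degree conditions; all sign conventions follow the paper.
Since the Koszul signs depend on the degrees of homogeneous arguments, all identities
involving signs are stated on homogeneous tuples.
-/

open scoped BigOperators

noncomputable section

/-- The sign `(−1)^x` for a parity `x : ZMod 2`, valued in `𝕂`. -/
def sgn2 (𝕂 : Type) [Field 𝕂] (x : ZMod 2) : 𝕂 := if x = 0 then 1 else -1

/-- Parity of a degree in `ℤ/N`; for even `N` this is the canonical map `ℤ/N → ℤ/2`. -/
def par2 {N : ℕ} (d : ZMod N) : ZMod 2 := ((ZMod.val d : ℕ) : ZMod 2)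

/-- Extension of a tuple by `0`. -/
def extZ {X : Type} [Zero X] {k : ℕ} (α : Fin k → X) : ℕ → X :=
  fun n => if h : n < k then α ⟨n, h⟩ else 0

/-- The tuple `(A 0, …, A (i₀−1), v, A (i₀+k₂), …)` of length `k₁` obtained by replacing the
`k₂` entries of `A` starting at position `i₀` by the single entry `v`. -/
def insArg {X : Type} [Zero X] (k₁ k₂ i₀ : ℕ) (v : X) (A : ℕ → X) : Fin k₁ → X :=
  fun j => if (j : ℕ) < i₀ then A j else if (j : ℕ) = i₀ then v else A ((j : ℕ) + k₂ - 1)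

/-- Multilinearity of a `k`-ary map. -/
def IsMultilin (𝕂 : Type) [Field 𝕂] {C D : Type} [AddCommGroup C] [Module 𝕂 C]
    [AddCommGroup D] [Module 𝕂 D] {k : ℕ} (f : (Fin k → C) → D) : Prop :=
  (∀ (α : Fin k → C) (j : Fin k) (x y : C),
    f (Function.update α j (x + y)) = f (Function.update α j x) + f (Function.update α j y)) ∧
  (∀ (α : Fin k → C) (j : Fin k) (c : 𝕂) (x : C),
    f (Function.update α j (c • x)) = c • f (Function.update α j x))

/-- The Koszul sign exponent `s(σ;α) = Σ_{i<j, σ(i)>σ(j)} (|α_{σ(i)}|+1)(|α_{σ(j)}|+1)`,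
computed from the degrees `d j = |α_j|`. -/
def koszulSign {N : ℕ} {k : ℕ} (σ : Equiv.Perm (Fin k)) (d : Fin k → ZMod N) : ZMod 2 :=
  ∑ p ∈ Finset.univ.filter (fun p : Fin k × Fin k => p.1 < p.2 ∧ σ p.2 < σ p.1),
    (par2 (d (σ p.1)) + 1) * (par2 (d (σ p.2)) + 1)

/-- `s(τ;α)` for the order-reversal permutation `τ : i ↦ k+1−i`. -/
def revSign {N : ℕ} {k : ℕ} (d : Fin k → ZMod N) : ZMod 2 :=
  koszulSign Fin.revPerm d

/-- A `k`-ary map between graded spaces has degree `t`: it sends homogeneous tuples of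
multidegree `d` into the piece of degree `Σ d + t`. -/
def HasDeg {𝕂 : Type} [Field 𝕂] {N : ℕ} {C D : Type} [AddCommGroup C] [Module 𝕂 C]
    [AddCommGroup D] [Module 𝕂 D] (ℳ : ZMod N → Submodule 𝕂 C)
    (𝒩 : ZMod N → Submodule 𝕂 D) (t : ℤ) {k : ℕ} (f : (Fin k → C) → D) : Prop :=
  ∀ (d : Fin k → ZMod N) (α : Fin k → C), (∀ j, α j ∈ ℳ (d j)) →
    f α ∈ 𝒩 ((∑ j, d j) + (t : ZMod N))

/-- The exponent `Σ_{j<i₀} (|α_j|+1)` appearing in the `A∞` relations (0-indexed). -/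
def insSign {N : ℕ} (D : ℕ → ZMod N) (i₀ : ℕ) : ZMod 2 :=
  ∑ j ∈ Finset.range i₀, (par2 (D j) + 1)

/-- Index set of the `G`-gapped `A∞` relations for inputs of arity `k` and energy `β`:
tuples `(k₁, k₂, i₀, β₁, β₂)` with `k₁+k₂ = k+1`, `i₀ < k₁` (`i₀` is the 0-indexed insertion
position) and `β₁+β₂ = β`.  By the finiteness assumption on `G` this set is finite. -/
def ainfIdx (G : AddSubmonoid ℝ) (k : ℕ) (β : G) : Set (ℕ × ℕ × ℕ × G × G) :=
  {t | t.1 + t.2.1 = k + 1 ∧ t.2.2.1 < t.1 ∧ t.2.2.2.1 + t.2.2.2.2 = β}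

/-- The term of the `A∞`-type relations indexed by `(k₁,k₂,i₀,β₁,β₂)`:
`(−1)^{Σ_{j<i₀}(|α_j|+1)} g_{k₁,β₁}(α₁,…,α_{i₀}, m_{k₂,β₂}(α_{i₀+1},…), …, α_k)`
(outer family `g`, inner family `m`). -/
def ainfTerm (𝕂 : Type) [Field 𝕂] {N : ℕ} {G : AddSubmonoid ℝ} {C D : Type}
    [AddCommGroup C] [Module 𝕂 C] [AddCommGroup D] [Module 𝕂 D]
    (g : ∀ k : ℕ, G → (Fin k → C) → D) (m : ∀ k : ℕ, G → (Fin k → C) → C)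
    {k : ℕ} (d : Fin k → ZMod N) (α : Fin k → C) : ℕ × ℕ × ℕ × G × G → D :=
  fun t =>
    sgn2 𝕂 (insSign (extZ d) t.2.2.1) •
      g t.1 t.2.2.2.1
        (insArg t.1 t.2.1 t.2.2.1
          (m t.2.1 t.2.2.2.2 fun l => extZ α (t.2.2.1 + (l : ℕ))) (extZ α))

/-- A `G`-gapped `A∞` algebra structure on the graded space `(C, ℳ)`: operations
`m_{k,β}` that are multilinear of degree `2−k`, with `m_{0,0} = 0`, satisfying the
`G`-gapped `A∞` relations on homogeneous tuples. -/
structure IsGappedAinf (𝕂 : Type) [Field 𝕂] {N : ℕ} (G : AddSubmonoid ℝ) {C : Type}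
    [AddCommGroup C] [Module 𝕂 C] (ℳ : ZMod N → Submodule 𝕂 C)
    (m : ∀ k : ℕ, G → (Fin k → C) → C) : Prop where
  multilinear : ∀ (k : ℕ) (β : G), IsMultilin 𝕂 (m k β)
  deg : ∀ (k : ℕ) (β : G), HasDeg ℳ ℳ (2 - (k : ℤ)) (m k β)
  zero : m 0 0 = 0
  rel : ∀ (k : ℕ) (β : G) (d : Fin k → ZMod N) (α : Fin k → C), (∀ j, α j ∈ ℳ (d j)) →
    (∑ᶠ t ∈ ainfIdx G k β, ainfTerm 𝕂 m m d α t) = 0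

/-- A `G`-gapped `A∞` pre-homomorphism: maps `f_{k,β}`, multilinear of degree `1−k`,
with `f_{0,0} = 0`. -/
structure IsGappedPreHom (𝕂 : Type) [Field 𝕂] {N : ℕ} (G : AddSubmonoid ℝ) {C D : Type}
    [AddCommGroup C] [Module 𝕂 C] [AddCommGroup D] [Module 𝕂 D]
    (ℳ : ZMod N → Submodule 𝕂 C) (𝒩 : ZMod N → Submodule 𝕂 D)
    (f : ∀ k : ℕ, G → (Fin k → C) → D) : Prop where
  multilinear : ∀ (k : ℕ) (β : G), IsMultilin 𝕂 (f k β)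
  deg : ∀ (k : ℕ) (β : G), HasDeg ℳ 𝒩 (1 - (k : ℤ)) (f k β)
  zero : f 0 0 = 0

/-- Index set for the composition-type sums: tuples `(l, (r₁,…,r_l), β₀, (β₁,…,β_l))`
with `r₁+⋯+r_l = k` and `β₀+β₁+⋯+β_l = β`. -/
def homIdx (G : AddSubmonoid ℝ) (k : ℕ) (β : G) :
    Set (Σ l : ℕ, (Fin l → ℕ) × G × (Fin l → G)) :=
  {t | (∑ j, t.2.1 j) = k ∧ t.2.2.1 + (∑ j, t.2.2.2 j) = β}

/-- Offset `r₁ + ⋯ + r_{j}` of the `j`-th chunk of the inputs. -/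
def chunkOff {l : ℕ} (r : Fin l → ℕ) (j : Fin l) : ℕ :=
  ∑ j' ∈ Finset.univ.filter (fun j' : Fin l => (j' : ℕ) < (j : ℕ)), r j'

/-- The term `g_{l,β₀}(f_{r₁,β₁}(α₁,…,α_{r₁}), …, f_{r_l,β_l}(α_{k−r_l+1},…,α_k))`. -/
def homTerm {G : AddSubmonoid ℝ} {C D E : Type} [Zero C]
    (g : ∀ l : ℕ, G → (Fin l → D) → E) (f : ∀ k : ℕ, G → (Fin k → C) → D)
    {k : ℕ} (α : Fin k → C) : (Σ l : ℕ, (Fin l → ℕ) × G × (Fin l → G)) → E :=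
  fun t =>
    g t.1 t.2.2.1 fun j =>
      f (t.2.1 j) (t.2.2.2 j) fun x => extZ α (chunkOff t.2.1 j + (x : ℕ))

/-- Composition of `G`-gapped `A∞` pre-homomorphisms. -/
def compPre (G : AddSubmonoid ℝ) {C D E : Type} [Zero C] [AddCommMonoid E]
    (g : ∀ l : ℕ, G → (Fin l → D) → E) (f : ∀ k : ℕ, G → (Fin k → C) → D) :
    ∀ k : ℕ, G → (Fin k → C) → E :=
  fun k β α => ∑ᶠ t ∈ homIdx G k β, homTerm g f α t

/-- A `G`-gapped `A∞` homomorphism from `(C, mC)` to `(D, mD)`. -/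
structure IsGappedHom (𝕂 : Type) [Field 𝕂] {N : ℕ} (G : AddSubmonoid ℝ) {C D : Type}
    [AddCommGroup C] [Module 𝕂 C] [AddCommGroup D] [Module 𝕂 D]
    (ℳ : ZMod N → Submodule 𝕂 C) (𝒩 : ZMod N → Submodule 𝕂 D)
    (mC : ∀ k : ℕ, G → (Fin k → C) → C) (mD : ∀ k : ℕ, G → (Fin k → D) → D)
    (f : ∀ k : ℕ, G → (Fin k → C) → D) : Prop where
  prehom : IsGappedPreHom 𝕂 G ℳ 𝒩 f
  hom : ∀ (k : ℕ) (β : G) (d : Fin k → ZMod N) (α : Fin k → C), (∀ j, α j ∈ ℳ (d j)) →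
    (∑ᶠ t ∈ homIdx G k β, homTerm mD f α t) = ∑ᶠ t ∈ ainfIdx G k β, ainfTerm 𝕂 f mC d α t

/-- `f'` is the opposite family of `f`:
`f'_{k,β}(α₁,…,α_k) = (−1)^{s(τ;α)+k+1} f_{k,β}(α_k,…,α₁)` on homogeneous tuples. -/
def IsOppFam (𝕂 : Type) [Field 𝕂] {N : ℕ} {G : AddSubmonoid ℝ} {C D : Type}
    [AddCommGroup C] [Module 𝕂 C] [AddCommGroup D] [Module 𝕂 D]
    (ℳ : ZMod N → Submodule 𝕂 C)
    (f f' : ∀ k : ℕ, G → (Fin k → C) → D) : Prop :=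
  ∀ (k : ℕ) (β : G) (d : Fin k → ZMod N) (α : Fin k → C), (∀ j, α j ∈ ℳ (d j)) →
    f' k β α = sgn2 𝕂 (revSign d + (k : ZMod 2) + 1) • f k β fun j => α (Fin.rev j)

/-- Self-duality of a family with respect to involutions `cC`, `cD`:
`f_{k,β}(c(α₁),…,c(α_k)) = (−1)^{s(τ;α)+k+1} c(f_{k,β}(α_k,…,α₁))` on homogeneous tuples. -/
def IsSelfDualFam (𝕂 : Type) [Field 𝕂] {N : ℕ} {G : AddSubmonoid ℝ} {C D : Type}
    [AddCommGroup C] [Module 𝕂 C] [AddCommGroup D] [Module 𝕂 D]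
    (ℳ : ZMod N → Submodule 𝕂 C) (cC : C →ₗ[𝕂] C) (cD : D →ₗ[𝕂] D)
    (f : ∀ k : ℕ, G → (Fin k → C) → D) : Prop :=
  ∀ (k : ℕ) (β : G) (d : Fin k → ZMod N) (α : Fin k → C), (∀ j, α j ∈ ℳ (d j)) →
    f k β (fun j => cC (α j)) =
      sgn2 𝕂 (revSign d + (k : ZMod 2) + 1) • cD (f k β fun j => α (Fin.rev j))

/-- The operation `m_{1,0}`, as an endomorphism of `C`. -/
def dOne {G : AddSubmonoid ℝ} {C : Type} [Zero C] (m : ∀ k : ℕ, G → (Fin k → C) → C) :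
    C → C :=
  fun x => m 1 0 ![x]

/-- The Hochschild coboundary of a `k`-cochain `η`, evaluated on a homogeneous `(k+1)`-tuple
of multidegree `d`.  Here `P a b x y` is the (possibly sign-twisted) product of `x ∈ ℳ a`
and `y ∈ ℳ b`, `e` is the parity of the internal degree `|η|` of `η` (as a map
`A[1]^{⊗k} → A`), and `out` is such that `η` sends tuples of multidegree `d'` into degree
`Σ d' + out`.  The formula is
`𝔟(η)(α₁,…,α_{k+1}) = (−1)^{|η|(|α₁|+1)+1} α₁·η(α₂,…,α_{k+1})`
`+ Σ_{i=1}^{k} (−1)^{|η|+1+Σ_{j=1}^{i}(|α_j|+1)} η(α₁,…,α_i·α_{i+1},…,α_{k+1})`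
`+ (−1)^{|η|+Σ_{j=1}^{k}(|α_j|+1)} η(α₁,…,α_k)·α_{k+1}`. -/
def hochB (𝕂 : Type) [Field 𝕂] {N : ℕ} {C : Type} [AddCommGroup C] [Module 𝕂 C]
    (P : ZMod N → ZMod N → C → C → C) (e : ZMod 2) (out : ZMod N)
    {k : ℕ} (η : (Fin k → C) → C) (d : Fin (k + 1) → ZMod N) (α : Fin (k + 1) → C) : C :=
  sgn2 𝕂 (e * (par2 (d 0) + 1) + 1) •
      P (d 0) ((∑ j : Fin k, d j.succ) + out) (α 0) (η fun j => α j.succ)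
    + (∑ i₀ ∈ Finset.range k,
        sgn2 𝕂 (e + 1 + ∑ j ∈ Finset.range (i₀ + 1), (par2 (extZ d j) + 1)) •
          η (insArg k 2 i₀
              (P (extZ d i₀) (extZ d (i₀ + 1)) (extZ α i₀) (extZ α (i₀ + 1))) (extZ α)))
    + sgn2 𝕂 (e + ∑ j ∈ Finset.range k, (par2 (extZ d j) + 1)) •
        P ((∑ j : Fin k, d j.castSucc) + out) (d (Fin.last k))
          (η fun j => α j.castSucc) (α (Fin.last k))

/-- The product of the underlying algebra of an `A∞` algebra:
`x ∘ y = (−1)^{|x|} m_{2,0}(x,y)` for `x` of degree `a`. -/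
def ulP (𝕂 : Type) [Field 𝕂] {N : ℕ} {G : AddSubmonoid ℝ} {C : Type} [AddCommGroup C]
    [Module 𝕂 C] (m : ∀ k : ℕ, G → (Fin k → C) → C) :
    ZMod N → ZMod N → C → C → C :=
  fun a _ x y => sgn2 𝕂 (par2 a) • m 2 0 ![x, y]

/-- The Hochschild coboundary for a graded associative algebra `A`, of a `k`-cochain `η`
of internal degree `t` (as a map `A[1]^{⊗k} → A`, so that `η` sends homogeneous tuples of
multidegree `d` into degree `Σ d + t − k`). -/
def hochBAlg (𝕂 : Type) [Field 𝕂] {N : ℕ} {A : Type} [Ring A] [Algebra 𝕂 A]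
    (t : ZMod N) {k : ℕ} (η : (Fin k → A) → A) (d : Fin (k + 1) → ZMod N)
    (α : Fin (k + 1) → A) : A :=
  hochB 𝕂 (fun _ _ x y => x * y) (par2 t) (t - (k : ZMod N)) η d α

/-- A Hochschild `k`-cochain of the graded algebra `(A, ℳ)` of internal degree `t`:
a multilinear map `A^{⊗k} → A`, regarded as a map `A[1]^{⊗k} → A` of degree `t`. -/
def IsHochCochain (𝕂 : Type) [Field 𝕂] {N : ℕ} {A : Type} [Ring A] [Algebra 𝕂 A]
    (ℳ : ZMod N → Submodule 𝕂 A) (t : ZMod N) {k : ℕ} (η : (Fin k → A) → A) : Prop :=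
  IsMultilin 𝕂 η ∧
    ∀ (d : Fin k → ZMod N) (α : Fin k → A), (∀ j, α j ∈ ℳ (d j)) →
      η α ∈ ℳ ((∑ j, d j) + t - (k : ZMod N))

/-- The graded-commutativity relation defining the free graded commutative algebra on the
graded vector space `(V, 𝒱)`: `v ⊗ w = (−1)^{|v||w|} w ⊗ v` for homogeneous `v, w`. -/
inductive GCRel (𝕂 : Type) [Field 𝕂] {N : ℕ} (V : Type) [AddCommGroup V] [Module 𝕂 V]
    (𝒱 : ZMod N → Submodule 𝕂 V) : TensorAlgebra 𝕂 V → TensorAlgebra 𝕂 V → Prop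
  | comm : ∀ {a b : ZMod N} {v w : V}, v ∈ 𝒱 a → w ∈ 𝒱 b →
      GCRel 𝕂 V 𝒱 (TensorAlgebra.ι 𝕂 v * TensorAlgebra.ι 𝕂 w)
        (sgn2 𝕂 (par2 a * par2 b) • (TensorAlgebra.ι 𝕂 w * TensorAlgebra.ι 𝕂 v))

/-- The free graded commutative algebra `ΛV` on the graded vector space `(V, 𝒱)`: the
quotient of the tensor algebra by the two-sided ideal generated by
`v⊗w − (−1)^{|v||w|} w⊗v`. -/
abbrev FreeGCA (𝕂 : Type) [Field 𝕂] {N : ℕ} (V : Type) [AddCommGroup V] [Module 𝕂 V]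
    (𝒱 : ZMod N → Submodule 𝕂 V) : Type :=
  RingQuot (GCRel 𝕂 V 𝒱)

/-- The image of `v ∈ V` in `ΛV`. -/
def gcaGen (𝕂 : Type) [Field 𝕂] {N : ℕ} (V : Type) [AddCommGroup V] [Module 𝕂 V]
    (𝒱 : ZMod N → Submodule 𝕂 V) (v : V) : FreeGCA 𝕂 V 𝒱 :=
  RingQuot.mkAlgHom 𝕂 (GCRel 𝕂 V 𝒱) (TensorAlgebra.ι 𝕂 v)

/-- The grading of `ΛV`: the piece of degree `e` is spanned by products of homogeneous
generators whose degrees sum to `e`. -/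
def gcaGrade (𝕂 : Type) [Field 𝕂] {N : ℕ} (V : Type) [AddCommGroup V] [Module 𝕂 V]
    (𝒱 : ZMod N → Submodule 𝕂 V) (e : ZMod N) : Submodule 𝕂 (FreeGCA 𝕂 V 𝒱) :=
  Submodule.span 𝕂 {x | ∃ l : List (ZMod N × V), (∀ p ∈ l, p.2 ∈ 𝒱 p.1) ∧
    (l.map Prod.fst).sum = e ∧ x = (l.map fun p => gcaGen 𝕂 V 𝒱 p.2).prod}
end


section Helpers

variable {𝕂 : Type} [Field 𝕂]

lemma zmod2_cases : ∀ x : ZMod 2, x = 0 ∨ x = 1 := by decide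

lemma sgn2_zero : sgn2 𝕂 0 = 1 := by simp [sgn2]

lemma sgn2_one : sgn2 𝕂 1 = -1 := by norm_num [sgn2]

lemma sgn2_add (x y : ZMod 2) : sgn2 𝕂 (x + y) = sgn2 𝕂 x * sgn2 𝕂 y := by
  rcases zmod2_cases x with rfl | rfl <;> rcases zmod2_cases y with rfl | rfl
  · simp [sgn2]
  · simp [sgn2, show ¬((0 : ZMod 2) + 1 = 0) by decide, show ¬((1 : ZMod 2) = 0) by decide]
  · simp [sgn2, show ¬((1 : ZMod 2) + 0 = 0) by decide, show ¬((1 : ZMod 2) = 0) by decide]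
  · simp [sgn2, show ((1 : ZMod 2) + 1 = 0) by decide, show ¬((1 : ZMod 2) = 0) by decide]

lemma sgn2_mul_self (x : ZMod 2) : sgn2 𝕂 x * sgn2 𝕂 x = 1 := by
  rcases zmod2_cases x with rfl | rfl <;> norm_num [sgn2]

lemma sgn2_smul_cancel {M : Type} [AddCommGroup M] [Module 𝕂 M] (x : ZMod 2) (v : M) :
    sgn2 𝕂 x • sgn2 𝕂 x • v = v := by
  rw [smul_smul, sgn2_mul_self, one_smul]

lemma sgn2_natCast (k : ℕ) : sgn2 𝕂 ((k : ZMod 2)) = (-1 : 𝕂) ^ k := by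
  induction k with
  | zero => simp [sgn2]
  | succ n ih =>
      have : ((n + 1 : ℕ) : ZMod 2) = (n : ZMod 2) + 1 := by push_cast; ring
      rw [this, sgn2_add, ih, sgn2_one, pow_succ]

section Par2

variable {N : ℕ}

lemma int_natAbs_cast_zmod2 (z : ℤ) : ((z.natAbs : ℕ) : ZMod 2) = ((z : ℤ) : ZMod 2) := by
  have hneg : ∀ a : ZMod 2, -a = a := by decide
  rcases Int.natAbs_eq z with h | h
  · rw [show ((z.natAbs : ℕ) : ZMod 2) = ((z.natAbs : ℤ) : ZMod 2) from
      (Int.cast_natCast _).symm, ← h]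
  · rw [show ((z.natAbs : ℕ) : ZMod 2) = ((z.natAbs : ℤ) : ZMod 2) from
      (Int.cast_natCast _).symm]
    have : ((z : ℤ) : ZMod 2) = -(((z.natAbs : ℤ)) : ZMod 2) := by
      rw [← Int.cast_neg, ← h]
    rw [this, hneg]

lemma par2_eq_cast (hN : 2 ∣ N) (x : ZMod N) : par2 x = ZMod.castHom hN (ZMod 2) x := by
  cases N with
  | zero => exact int_natAbs_cast_zmod2 x
  | succ n =>
      rw [ZMod.castHom_apply, ← ZMod.natCast_val]
      rfl

lemma par2_add (hN : 2 ∣ N) (x y : ZMod N) : par2 (x + y) = par2 x + par2 y := by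
  rw [par2_eq_cast hN, par2_eq_cast hN, par2_eq_cast hN, map_add]

lemma par2_zero (hN : 2 ∣ N) : par2 (0 : ZMod N) = 0 := by
  rw [par2_eq_cast hN, map_zero]

lemma par2_one (hN : 2 ∣ N) : par2 (1 : ZMod N) = 1 := by
  rw [par2_eq_cast hN, map_one]

lemma par2_two (hN : 2 ∣ N) : par2 (2 : ZMod N) = 0 := by
  have h : (2 : ZMod N) = 1 + 1 := by norm_num
  rw [h, par2_add hN, par2_one hN]
  decide

end Par2

section RevSign

variable {N : ℕ}

lemma revSign_zero (d : Fin 0 → ZMod N) : revSign d = 0 := by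
  simp [revSign, koszulSign]

lemma revSign_one (d : Fin 1 → ZMod N) : revSign d = 0 := by
  rw [revSign, koszulSign, show (Finset.univ.filter
    (fun p : Fin 1 × Fin 1 => p.1 < p.2 ∧ Fin.revPerm p.2 < Fin.revPerm p.1)) = ∅ by decide]
  simp

lemma revSign_two (d : Fin 2 → ZMod N) :
    revSign d = (par2 (d 1) + 1) * (par2 (d 0) + 1) := by
  rw [revSign, koszulSign, show (Finset.univ.filter
    (fun p : Fin 2 × Fin 2 => p.1 < p.2 ∧ Fin.revPerm p.2 < Fin.revPerm p.1)) =
      {((0 : Fin 2), (1 : Fin 2))} by decide]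
  rw [Finset.sum_singleton]
  norm_num [show Fin.revPerm (0 : Fin 2) = 1 by decide, show Fin.revPerm (1 : Fin 2) = 0 by decide]

lemma revSign_ones {k : ℕ} (d : Fin k → ZMod N) (h : ∀ j, par2 (d j) = 1) :
    revSign d = 0 := by
  rw [revSign, koszulSign]
  apply Finset.sum_eq_zero
  intro p _
  rw [h, h]
  decide

end RevSign

section Multilin

variable {C D : Type} [AddCommGroup C] [Module 𝕂 C] [AddCommGroup D] [Module 𝕂 D]

lemma multilin_smul_all {k : ℕ} {f : (Fin k → C) → D} (hf : IsMultilin 𝕂 f)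
    (s : 𝕂) (α : Fin k → C) : f (fun j => s • α j) = s ^ k • f α := by
  have key : ∀ t : Finset (Fin k),
      f (fun j => if j ∈ t then s • α j else α j) = s ^ t.card • f α := by
    intro t
    induction t using Finset.induction_on with
    | empty => simp
    | @insert a t ha ih =>
        have hfun : (fun j => if j ∈ insert a t then s • α j else α j) =
            Function.update (fun j => if j ∈ t then s • α j else α j) a
              (s • ((fun j => if j ∈ t then s • α j else α j) a)) := by
          funext j
          by_cases hj : j = a
          · subst hj; simp [ha]
          · simp [Function.update_of_ne hj, Finset.mem_insert, hj]
        rw [hfun, hf.2, Function.update_eq_self, ih, Finset.card_insert_of_notMem ha,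
          pow_succ, smul_smul, mul_comm]
  have := key Finset.univ
  simpa using this

lemma multilin_zero_slot {k : ℕ} {f : (Fin k → C) → D} (hf : IsMultilin 𝕂 f)
    (α : Fin k → C) (j : Fin k) : f (Function.update α j 0) = 0 := by
  have := hf.2 α j 0 0
  simpa using this

lemma update_pair_zero (x y z : C) : Function.update ![x, y] 0 z = ![z, y] := by
  funext j
  fin_cases j <;> simp

lemma update_pair_one (x y z : C) : Function.update ![x, y] 1 z = ![x, z] := by
  funext j
  fin_cases j <;> simp

lemma rev_pair {X : Type} (x y : X) : (fun j : Fin 2 => ![x, y] (Fin.rev j)) = ![y, x] := by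
  funext j
  fin_cases j <;> rfl

lemma multilin_pair_smul {f : (Fin 2 → C) → D} (hf : IsMultilin 𝕂 f)
    (s t : 𝕂) (x y : C) : f ![s • x, t • y] = s • t • f ![x, y] := by
  have h1 := hf.2 ![x, t • y] 0 s x
  rw [update_pair_zero, update_pair_zero] at h1
  have h2 := hf.2 ![x, y] 1 t y
  rw [update_pair_one, update_pair_one] at h2
  rw [h1, h2]

end Multilin

end Helpers


lemma eq_neg_self_eq_zero {𝕂 M : Type} [Field 𝕂] [AddCommGroup M] [Module 𝕂 M]
    (hchar : (2 : 𝕂) ≠ 0) {x : M} (h : x = -x) : x = 0 := by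
  have h2 : (2 : 𝕂) • x = 0 := by
    rw [two_smul]
    nth_rewrite 2 [h]
    simp
  exact (smul_eq_zero.mp h2).resolve_left hchar

/-- Assume `char 𝕂 ≠ 2`.  Let `(C, m)` together with the involution `c`
be a weakly minimal anti-symmetric `G`-gapped `A∞` algebra: `m` is `c` self-dual,
`m_{1,0} = 0`, and the underlying algebra `A_C = C` is isomorphic as a graded algebra
(via `θ`) to the free graded commutative algebra `ΛV` on a graded vector space `V`
concentrated in odd degrees, with `c` corresponding to the automorphism induced by
`−Id_V` (i.e. `c = −1` on the generators).  Then `m` is flat and minimal; moreover for all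
homogeneous degree-1 elements `b₁,…,b_k`, `m_{k,β}(b₁,…,b_k) = −m_{k,β}(b_k,…,b₁)`,
and in particular `m_{k,β}(b,…,b) = 0` for every degree-1 element `b`, so that every
degree-1 element is a bounding cochain. -/
theorem weaklyMinimal_antiSymmetric_flat_minimal {𝕂 : Type} [Field 𝕂]
    (hchar : (2 : 𝕂) ≠ 0) {N : ℕ} (hN : 2 ∣ N)
    (G : AddSubmonoid ℝ) (hGnn : ∀ x ∈ G, (0 : ℝ) ≤ x)
    (hGfin : ∀ E : ℝ, {x : ℝ | x ∈ G ∧ x ≤ E}.Finite)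
    {C : Type} [AddCommGroup C] [Module 𝕂 C] (ℳ : ZMod N → Submodule 𝕂 C)
    [DirectSum.Decomposition ℳ]
    (m : ∀ k : ℕ, G → (Fin k → C) → C) (hm : IsGappedAinf 𝕂 G ℳ m)
    (hwm : m 1 0 = 0)
    (c : C →ₗ[𝕂] C) (hcinv : ∀ x, c (c x) = x)
    (hcdeg : ∀ (e : ZMod N) (x : C), x ∈ ℳ e → c x ∈ ℳ e)
    (hmsd : IsSelfDualFam 𝕂 ℳ c c m)
    -- the underlying algebra `A_C = C` is the free graded commutative algebra on a
    -- graded vector space `(V, 𝒱)` concentrated in odd degrees ...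
    {V : Type} [AddCommGroup V] [Module 𝕂 V] (𝒱 : ZMod N → Submodule 𝕂 V)
    (hodd : ∀ e : ZMod N, par2 e = 0 → 𝒱 e = ⊥)
    (θ : FreeGCA 𝕂 V 𝒱 ≃ₗ[𝕂] C)
    (hθgr : ∀ e : ZMod N, (gcaGrade 𝕂 V 𝒱 e).map (θ : FreeGCA 𝕂 V 𝒱 →ₗ[𝕂] C) = ℳ e)
    (hθmul : ∀ (a b : ZMod N) (x y : FreeGCA 𝕂 V 𝒱),
      x ∈ gcaGrade 𝕂 V 𝒱 a → y ∈ gcaGrade 𝕂 V 𝒱 b →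
      θ (x * y) = sgn2 𝕂 (par2 a) • m 2 0 ![θ x, θ y])
    -- ... and `c` corresponds to the automorphism of `ΛV` induced by `−Id_V`
    (hcgen : ∀ (a : ZMod N) (v : V), v ∈ 𝒱 a →
      c (θ (gcaGen 𝕂 V 𝒱 v)) = -θ (gcaGen 𝕂 V 𝒱 v)) :
    -- `m` is flat and minimal
    (∀ β : G, m 0 β = 0) ∧ (∀ β : G, m 1 β = 0) ∧
    -- reversal anti-symmetry on degree-1 elements
    (∀ (k : ℕ) (β : G) (b : Fin k → C), (∀ j, b j ∈ ℳ 1) →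
      m k β b = -m k β fun j => b (Fin.rev j)) ∧
    -- every degree-1 element is a bounding cochain: `m_{k,β}(b,…,b) = 0`
    (∀ (k : ℕ) (β : G) (b : C), b ∈ ℳ 1 → m k β (fun _ => b) = 0) := by
  classical
  -- membership translations
  have hone : (1 : FreeGCA 𝕂 V 𝒱) ∈ gcaGrade 𝕂 V 𝒱 0 :=
    Submodule.subset_span ⟨[], by simp, by simp, by simp⟩
  have hθmem : ∀ (e : ZMod N) (x : FreeGCA 𝕂 V 𝒱), x ∈ gcaGrade 𝕂 V 𝒱 e → θ x ∈ ℳ e := by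
    intro e x hx
    rw [← hθgr e]
    exact ⟨x, hx, rfl⟩
  have hmem_ex : ∀ (e : ZMod N) (y : C), y ∈ ℳ e → ∃ x ∈ gcaGrade 𝕂 V 𝒱 e, θ x = y := by
    intro e y hy
    rw [← hθgr e] at hy
    obtain ⟨x, hx, hxy⟩ := hy
    exact ⟨x, hx, hxy⟩
  -- unit laws
  have runit : ∀ (a : ZMod N) (x : FreeGCA 𝕂 V 𝒱), x ∈ gcaGrade 𝕂 V 𝒱 a →
      m 2 0 ![θ x, θ 1] = sgn2 𝕂 (par2 a) • θ x := by
    intro a x hx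
    have h := hθmul a 0 x 1 hx hone
    rw [mul_one] at h
    calc m 2 0 ![θ x, θ 1]
        = sgn2 𝕂 (par2 a) • (sgn2 𝕂 (par2 a) • m 2 0 ![θ x, θ 1]) :=
          (sgn2_smul_cancel _ _).symm
      _ = sgn2 𝕂 (par2 a) • θ x := by rw [← h]
  -- c fixes the unit
  have hu : θ (1 : FreeGCA 𝕂 V 𝒱) ∈ ℳ 0 := hθmem 0 1 hone
  have hw : c (θ (1 : FreeGCA 𝕂 V 𝒱)) ∈ ℳ 0 := hcdeg 0 _ hu
  have hcu : c (θ (1 : FreeGCA 𝕂 V 𝒱)) = θ 1 := by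
    obtain ⟨z, hz, hzw⟩ := hmem_ex 0 _ hw
    have hwu : m 2 0 ![c (θ (1 : FreeGCA 𝕂 V 𝒱)), θ 1] = c (θ (1 : FreeGCA 𝕂 V 𝒱)) := by
      rw [← hzw, runit 0 z hz, par2_zero hN, sgn2_zero, one_smul]
    have hdual := hmsd 2 0 ![0, 0] ![θ 1, c (θ (1 : FreeGCA 𝕂 V 𝒱))] (by
      intro j; fin_cases j
      · simpa using hu
      · simpa using hw)
    have e1 : (fun j => c (![θ (1 : FreeGCA 𝕂 V 𝒱), c (θ 1)] j)) =
        ![c (θ (1 : FreeGCA 𝕂 V 𝒱)), θ 1] := by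
      funext j; fin_cases j
      · simp
      · simpa using hcinv (θ 1)
    have e2 : (fun j : Fin 2 => ![θ (1 : FreeGCA 𝕂 V 𝒱), c (θ 1)] (Fin.rev j)) =
        ![c (θ (1 : FreeGCA 𝕂 V 𝒱)), θ 1] := rev_pair _ _
    have e3 : revSign ![(0 : ZMod N), 0] + ((2 : ℕ) : ZMod 2) + 1 = 0 := by
      rw [revSign_two]
      rw [show (![(0 : ZMod N), 0] 1) = 0 from rfl, show (![(0 : ZMod N), 0] 0) = 0 from rfl,
        par2_zero hN]
      decide
    rw [e1, e2, e3, sgn2_zero, one_smul, hwu, hcinv] at hdual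
    exact hdual
  -- generator swap
  have genswap : ∀ (a a' : ZMod N) (v v' : V), v ∈ 𝒱 a → v' ∈ 𝒱 a' →
      gcaGen 𝕂 V 𝒱 v * gcaGen 𝕂 V 𝒱 v' =
        sgn2 𝕂 (par2 a * par2 a') • (gcaGen 𝕂 V 𝒱 v' * gcaGen 𝕂 V 𝒱 v) := by
    intro a a' v v' hv hv'
    have hrel := RingQuot.mkAlgHom_rel 𝕂 (GCRel.comm hv hv')
    rw [map_mul, map_smul, map_mul] at hrel
    exact hrel
  -- moving a generator past a product of generators
  have hcomm : ∀ (a : ZMod N) (v : V), v ∈ 𝒱 a → ∀ (L : List (ZMod N × V)),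
      (∀ p ∈ L, p.2 ∈ 𝒱 p.1) →
      (L.map fun p => gcaGen 𝕂 V 𝒱 p.2).prod * gcaGen 𝕂 V 𝒱 v =
        sgn2 𝕂 (par2 a * par2 ((L.map Prod.fst).sum)) •
          (gcaGen 𝕂 V 𝒱 v * (L.map fun p => gcaGen 𝕂 V 𝒱 p.2).prod) := by
    intro a v hv L
    induction L with
    | nil => intro _; simp [par2_zero hN, sgn2_zero]
    | cons p L ih =>
        intro hL
        have hp : p.2 ∈ 𝒱 p.1 := hL p List.mem_cons_self
        have hL' : ∀ q ∈ L, q.2 ∈ 𝒱 q.1 := fun q hq => hL q (List.mem_cons_of_mem p hq)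
        simp only [List.map_cons, List.prod_cons, List.sum_cons]
        rw [mul_assoc, ih hL', mul_smul_comm, ← mul_assoc, genswap p.1 a p.2 v hp hv,
          smul_mul_assoc, smul_smul, ← sgn2_add, mul_assoc]
        have hexp : par2 a * par2 ((L.map Prod.fst).sum) + par2 p.1 * par2 a =
            par2 a * par2 (p.1 + (L.map Prod.fst).sum) := by
          rw [par2_add hN]; ring
        rw [hexp]
  -- the main induction: c acts on a product of l generators by (-1)^l
  have hkey : ∀ L : List (ZMod N × V), (∀ p ∈ L, p.2 ∈ 𝒱 p.1) →
      c (θ ((L.map fun p => gcaGen 𝕂 V 𝒱 p.2).prod)) =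
        sgn2 𝕂 (par2 ((L.map Prod.fst).sum)) •
          θ ((L.map fun p => gcaGen 𝕂 V 𝒱 p.2).prod) := by
    intro L
    induction L with
    | nil =>
        intro _
        simpa [par2_zero hN, sgn2_zero] using hcu
    | cons p L ih =>
        intro hL
        have hp : p.2 ∈ 𝒱 p.1 := hL p List.mem_cons_self
        have hL' : ∀ q ∈ L, q.2 ∈ 𝒱 q.1 := fun q hq => hL q (List.mem_cons_of_mem p hq)
        have ihh := ih hL'
        simp only [List.map_cons, List.prod_cons, List.sum_cons]
        by_cases hpa : par2 p.1 = 0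
        · have hv0 : p.2 = 0 := by
            have h1 := hp
            rw [hodd p.1 hpa] at h1
            simpa using h1
          have hg0 : gcaGen 𝕂 V 𝒱 p.2 = 0 := by
            rw [hv0]
            show RingQuot.mkAlgHom 𝕂 (GCRel 𝕂 V 𝒱) (TensorAlgebra.ι 𝕂 (0 : V)) = 0
            rw [map_zero, map_zero]
          simp [hg0]
        · have hpa1 : par2 p.1 = 1 := (zmod2_cases _).resolve_left hpa
          set g := gcaGen 𝕂 V 𝒱 p.2 with hgdef
          set P := (L.map fun q => gcaGen 𝕂 V 𝒱 q.2).prod with hPdef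
          set b' := (L.map Prod.fst).sum with hbdef
          have hgg : g ∈ gcaGrade 𝕂 V 𝒱 p.1 :=
            Submodule.subset_span ⟨[p], by simpa using hp, by simp, by simp [hgdef]⟩
          have hPg : P ∈ gcaGrade 𝕂 V 𝒱 b' := Submodule.subset_span ⟨L, hL', rfl, rfl⟩
          have hθg : θ g ∈ ℳ p.1 := hθmem _ _ hgg
          have hθP : θ P ∈ ℳ b' := hθmem _ _ hPg
          have F1 : m 2 0 ![θ g, θ P] = -θ (g * P) := by
            have h := hθmul p.1 b' g P hgg hPg
            rw [hpa1, sgn2_one, neg_smul, one_smul] at h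
            rw [h, neg_neg]
          have F3 : θ (P * g) = sgn2 𝕂 (par2 b') • θ (g * P) := by
            have h := hcomm p.1 p.2 hp L hL'
            rw [hpa1, one_mul] at h
            rw [h, map_smul]
          have F2 : m 2 0 ![θ P, θ g] = θ (g * P) := by
            have h := hθmul b' p.1 P g hPg hgg
            rw [F3] at h
            calc m 2 0 ![θ P, θ g]
                = sgn2 𝕂 (par2 b') • (sgn2 𝕂 (par2 b') • m 2 0 ![θ P, θ g]) :=
                  (sgn2_smul_cancel _ _).symm
              _ = sgn2 𝕂 (par2 b') • (sgn2 𝕂 (par2 b') • θ (g * P)) := by rw [← h]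
              _ = θ (g * P) := sgn2_smul_cancel _ _
          have hdual := hmsd 2 0 ![p.1, b'] ![θ g, θ P] (by
            intro j; fin_cases j
            · simpa using hθg
            · simpa using hθP)
          have e1 : (fun j => c (![θ g, θ P] j)) =
              ![(-1 : 𝕂) • θ g, sgn2 𝕂 (par2 b') • θ P] := by
            funext j; fin_cases j
            · simp only [Matrix.cons_val_zero]
              rw [neg_one_smul]
              exact hcgen p.1 p.2 hp
            · simpa using ihh
          have e2 : (fun j : Fin 2 => ![θ g, θ P] (Fin.rev j)) = ![θ P, θ g] := rev_pair _ _
          have e3 : revSign ![p.1, b'] + ((2 : ℕ) : ZMod 2) + 1 = 1 := by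
            rw [revSign_two]
            rw [show (![p.1, b'] 1) = b' from rfl, show (![p.1, b'] 0) = p.1 from rfl, hpa1]
            rw [show ((2 : ℕ) : ZMod 2) = 0 from rfl,
              show ((1 : ZMod 2) + 1) = 0 from rfl, mul_zero, zero_add, zero_add]
          rw [e1, e2, e3, sgn2_one, multilin_pair_smul (hm.multilinear 2 0), F1, F2] at hdual
          -- hdual : (-1) • sgn2 (par2 b') • (-θ (g*P)) = (-1) • c (θ (g * P))
          have hpar : par2 (p.1 + b') = par2 b' + 1 := by
            rw [par2_add hN, hpa1]; ring
          rw [hpar, sgn2_add, sgn2_one]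
          -- goal : c (θ (g * P)) = sgn2 (par2 b') * -1 • θ (g * P)
          have h2 : sgn2 𝕂 (par2 b') • -θ (g * P) = c (θ (g * P)) := by
            have h3 := congrArg (fun z : C => (-1 : 𝕂) • z) hdual
            simpa only [smul_smul, ← mul_assoc, neg_mul_neg, one_mul, one_smul] using h3
          rw [mul_neg_one, neg_smul, ← h2, smul_neg]
  -- the involution acts on each graded piece by the parity sign
  have hcM : ∀ (e : ZMod N) (x : C), x ∈ ℳ e → c x = sgn2 𝕂 (par2 e) • x := by
    intro e x hx
    obtain ⟨y, hy, rfl⟩ := hmem_ex e x hx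
    clear hx
    induction hy using Submodule.span_induction with
    | mem z hz =>
        obtain ⟨L, hL1, hL2, rfl⟩ := hz
        rw [← hL2]
        exact hkey L hL1
    | zero => simp
    | add u v _ _ hu hv => rw [map_add, map_add, hu, hv, smul_add]
    | smul t u _ hu => rw [map_smul, map_smul, hu, smul_comm]
  -- flatness
  have flat : ∀ β : G, m 0 β = 0 := by
    intro β
    funext α
    have hdual := hmsd 0 β Fin.elim0 α (fun j => j.elim0)
    have e1 : (fun j : Fin 0 => c (α j)) = α := by funext j; exact j.elim0
    have e2 : (fun j : Fin 0 => α (Fin.rev j)) = α := by funext j; exact j.elim0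
    have e3 : revSign (Fin.elim0 : Fin 0 → ZMod N) + ((0 : ℕ) : ZMod 2) + 1 = 1 := by
      rw [revSign_zero]; decide
    have hdeg : m 0 β α ∈ ℳ 2 := by
      have h := hm.deg 0 β Fin.elim0 α (fun j => j.elim0)
      have hidx : (∑ j : Fin 0, (Fin.elim0 : Fin 0 → ZMod N) j) +
          ((2 - ((0 : ℕ) : ℤ) : ℤ) : ZMod N) = 2 := by
        rw [Fin.sum_univ_zero, zero_add]
        push_cast
        ring
      rwa [hidx] at h
    rw [e1, e2, e3, sgn2_one, hcM 2 _ hdeg, par2_two hN, sgn2_zero, one_smul,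
      neg_one_smul] at hdual
    show m 0 β α = 0
    exact eq_neg_self_eq_zero hchar hdual
  -- minimality
  have min1 : ∀ (β : G) (d0 : ZMod N) (x : C), x ∈ ℳ d0 → m 1 β (fun _ => x) = 0 := by
    intro β d0 x hx
    have hdual := hmsd 1 β (fun _ => d0) (fun _ => x) (fun j => hx)
    have e1 : (fun j : Fin 1 => c ((fun _ : Fin 1 => x) j)) =
        (fun _ : Fin 1 => sgn2 𝕂 (par2 d0) • x) := by
      funext j
      exact hcM d0 x hx
    have e2 : (fun j : Fin 1 => (fun _ : Fin 1 => x) (Fin.rev j)) = (fun _ : Fin 1 => x) := rfl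
    have hdeg : m 1 β (fun _ : Fin 1 => x) ∈ ℳ (d0 + 1) := by
      have h := hm.deg 1 β (fun _ => d0) (fun _ => x) (fun j => hx)
      have hidx : (∑ _j : Fin 1, d0) + ((2 - ((1 : ℕ) : ℤ) : ℤ) : ZMod N) = d0 + 1 := by
        rw [Fin.sum_univ_one]
        push_cast
        ring
      rwa [hidx] at h
    rw [e1, e2, revSign_one, multilin_smul_all (hm.multilinear 1 β), pow_one,
      hcM _ _ hdeg, par2_add hN, par2_one hN] at hdual
    rw [show (0 : ZMod 2) + ((1 : ℕ) : ZMod 2) + 1 = 0 by decide, sgn2_zero, one_smul,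
      sgn2_add, sgn2_one] at hdual
    -- hdual : sgn2 (par2 d0) • m₁ = (sgn2 (par2 d0) * -1) • m₁
    have h2 := congrArg (fun z : C => sgn2 𝕂 (par2 d0) • z) hdual
    simp only [smul_smul, ← mul_assoc, sgn2_mul_self, one_mul, mul_neg_one, neg_smul,
      one_smul] at h2
    rw [smul_neg, sgn2_smul_cancel] at h2
    exact eq_neg_self_eq_zero hchar h2
  have min0 : ∀ β : G, ∀ x : C, m 1 β (fun _ => x) = 0 := by
    intro β
    refine DirectSum.Decomposition.inductionOn ℳ ?_ ?_ ?_
    · have h := multilin_zero_slot (hm.multilinear 1 β) (fun _ => (0 : C)) 0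
      have e : Function.update (fun _ : Fin 1 => (0 : C)) 0 0 = fun _ : Fin 1 => (0 : C) := by
        funext j
        rw [Subsingleton.elim j 0]
        simp
      rwa [e] at h
    · rintro i ⟨x, hx⟩
      exact min1 β i x hx
    · intro u v hu hv
      have e : (fun _ : Fin 1 => u + v) = Function.update (fun _ : Fin 1 => u) 0 (u + v) := by
        funext j
        rw [Subsingleton.elim j 0]
        simp
      have h := (hm.multilinear 1 β).1 (fun _ : Fin 1 => u) 0 u v
      have e1 : Function.update (fun _ : Fin 1 => u) 0 u = fun _ : Fin 1 => u := by
        funext j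
        rw [Subsingleton.elim j 0]
        simp
      have e2 : Function.update (fun _ : Fin 1 => u) 0 v = fun _ : Fin 1 => v := by
        funext j
        rw [Subsingleton.elim j 0]
        simp
      rw [e1, e2] at h
      rw [e, h, hu, hv, add_zero]
  have min : ∀ β : G, m 1 β = 0 := by
    intro β
    funext α
    have e : α = fun _ : Fin 1 => α 0 := by
      funext j
      rw [Subsingleton.elim j 0]
    show m 1 β α = 0
    rw [e, min0 β (α 0)]
  have anti : ∀ (k : ℕ) (β : G) (b : Fin k → C), (∀ j, b j ∈ ℳ 1) →
      m k β b = -m k β fun j => b (Fin.rev j) := by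
    intro k β b hb
    have hdual := hmsd k β (fun _ => 1) b (fun j => hb j)
    have e1 : (fun j => c (b j)) = (fun j => (-1 : 𝕂) • b j) := by
      funext j
      rw [hcM 1 (b j) (hb j), par2_one hN, sgn2_one]
    have hrev : revSign (fun _ : Fin k => (1 : ZMod N)) = 0 :=
      revSign_ones _ (fun _ => par2_one hN)
    have hdeg : m k β (fun j => b (Fin.rev j)) ∈ ℳ 2 := by
      have h := hm.deg k β (fun _ => 1) (fun j => b (Fin.rev j)) (fun j => hb (Fin.rev j))
      have hidx : (∑ _j : Fin k, (1 : ZMod N)) + ((2 - (k : ℤ) : ℤ) : ZMod N) = 2 := by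
        rw [Finset.sum_const, Finset.card_univ, Fintype.card_fin]
        push_cast
        ring
      rwa [hidx] at h
    rw [e1, multilin_smul_all (hm.multilinear k β), hrev, zero_add, hcM 2 _ hdeg,
      par2_two hN, sgn2_zero, one_smul, sgn2_add, sgn2_natCast, sgn2_one, mul_neg_one] at hdual
    -- hdual : (-1)^k • m k β b = -(-1)^k • m k β (rev)
    have h2 := congrArg (fun z : C => ((-1 : 𝕂) ^ k) • z) hdual
    have hcancel : ((-1 : 𝕂) ^ k) * ((-1 : 𝕂) ^ k) = 1 := by
      rw [← mul_pow]; norm_num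
    simp only [smul_smul] at h2
    rw [hcancel, one_smul, mul_neg, hcancel, neg_smul, one_smul] at h2
    exact h2
  refine ⟨flat, min, anti, ?_⟩
  intro k β b hb
  have h := anti k β (fun _ => b) (fun _ => hb)
  exact eq_neg_self_eq_zero hchar h
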